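/- For all integers n ≥ 5, the injective 2-split dimension satisfies ⌊n/2⌋ ≤ ID_2(n) ≤ n − 3. -/

import Mathlib

/-!
Upper bound: take the trivial splits together with the 2-splits `{a, b} | X - {a, b}` for the
non-edges `ab` of the cycle `1 - 2 - ⋯ - n - 1`. Two distinct 3-sets are separated by one of
them because the cycle has no triangle and, for `n ≥ 5`, no two vertices with two common
neighbours. Trivial splits are compatible with every split and two 2-splits are incompatible
iff their pairs meet, so an incompatible family is an intersecting family of non-edges: a star,
of size at most `n - 3`, or part of a triangle, of size at most `3 ≤ n - 3` (for `n = 5` the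
non-edges form a 5-cycle, which has no triangle).

Lower bound: in an injective system of 1- and 2-splits of dimension `d`, the 2-splits through a
fixed point are pairwise incompatible, so every point `c` misses at least `n - 1 - d` of the
pairs `{c, y}`. By injectivity a 2-set is missed on both of its points by at most one `c`, hence
`n · C(n - 1 - d, 2) ≤ C(n, 2)`, which fails when `2 (d + 1) ≤ n`.
-/

namespace InjectiveSplitSystems

open Finset

variable {α : Type*} [DecidableEq α]

/-- A split of `X`: an unordered bipartition of `X` into two nonempty disjoint parts,
represented as the two-element set `{A, B}` of its parts. -/
def IsSplit (X : Finset α) (S : Finset (Finset α)) : Prop :=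
  ∃ A B : Finset α, S = {A, B} ∧ A ∪ B = X ∧ A ∩ B = ∅ ∧ A ≠ ∅ ∧ B ≠ ∅

/-- `S` is an `r`-split of `X`: a split of `X` whose minimum part size is `r`. -/
def IsRSplit (X : Finset α) (r : ℕ) (S : Finset (Finset α)) : Prop :=
  IsSplit X S ∧ (∃ A ∈ S, A.card = r) ∧ ∀ A ∈ S, r ≤ A.card

/-- A split system on `X`: a set of splits of `X` containing all trivial splits
`{x} | X \ {x}`, `x ∈ X`. -/
def IsSplitSystem (X : Finset α) (𝒮 : Finset (Finset (Finset α))) : Prop :=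
  (∀ S ∈ 𝒮, IsSplit X S) ∧ ∀ x ∈ X, ({{x}, X \ {x}} : Finset (Finset α)) ∈ 𝒮

/-- `phiNe Y Y' S` says `φ_Y(S) ≠ φ_{Y'}(S)`: the part of `S` containing at least two
elements of the 3-set `Y` differs from the part of `S` containing at least two
elements of the 3-set `Y'`. -/
def phiNe (Y Y' : Finset α) (S : Finset (Finset α)) : Prop :=
  ∃ t ∈ S, ∃ t' ∈ S, t ≠ t' ∧ 2 ≤ (Y ∩ t).card ∧ 2 ≤ (Y' ∩ t').card

/-- A split system on `X` is injective if for all distinct 3-subsets `Y`, `Y'` of `X`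
there is a split `S ∈ 𝒮` with `φ_Y(S) ≠ φ_{Y'}(S)`. -/
def IsInjective (X : Finset α) (𝒮 : Finset (Finset (Finset α))) : Prop :=
  ∀ Y Y' : Finset α, Y ⊆ X → Y' ⊆ X → Y.card = 3 → Y'.card = 3 → Y ≠ Y' →
    ∃ S ∈ 𝒮, phiNe Y Y' S

/-- The restriction `S|_Y` of a split to `Y`, as the set of restricted parts. -/
def restrictSplit (S : Finset (Finset α)) (Y : Finset α) : Finset (Finset α) :=
  S.image (· ∩ Y)

open scoped Classical in
/-- The restriction `𝒮|_Y` of a split system to `Y`: all splits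
`(A ∩ Y) | (B ∩ Y)` with `A|B ∈ 𝒮` and both intersections nonempty. -/
noncomputable def restrictSS (𝒮 : Finset (Finset (Finset α))) (Y : Finset α) :
    Finset (Finset (Finset α)) :=
  (𝒮.image fun S => restrictSplit S Y).filter fun T => ∀ t ∈ T, t ≠ ∅

/-- `𝒮` 4-dices `X`. -/
def FourDices (X : Finset α) (𝒮 : Finset (Finset (Finset α))) : Prop :=
  X.card < 4 ∨ ∀ Y ⊆ X, Y.card = 4 →
    ∃ 𝒯 ⊆ restrictSS 𝒮 Y, 2 ≤ 𝒯.card ∧ ∀ S ∈ 𝒯, IsRSplit Y 2 S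

/-- `𝒮` 5-dices `X`. -/
def FiveDices (X : Finset α) (𝒮 : Finset (Finset (Finset α))) : Prop :=
  X.card < 5 ∨ ∀ Y ⊆ X, Y.card = 5 →
    ∃ 𝒯 ⊆ restrictSS 𝒮 Y, 5 ≤ 𝒯.card ∧ ∀ S ∈ 𝒯, IsRSplit Y 2 S

/-- `𝒮` 6-dices `X`: every 6-subset restriction contains a 3-split or a triangle
of 2-splits. -/
def SixDices (X : Finset α) (𝒮 : Finset (Finset (Finset α))) : Prop :=
  X.card < 6 ∨ ∀ Y ⊆ X, Y.card = 6 →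
    (∃ S ∈ restrictSS 𝒮 Y, IsRSplit Y 3 S) ∨
    (∃ x ∈ Y, ∃ y ∈ Y, ∃ z ∈ Y, x ≠ y ∧ x ≠ z ∧ y ≠ z ∧
      ({{x, y}, Y \ {x, y}} : Finset (Finset α)) ∈ restrictSS 𝒮 Y ∧
      ({{x, z}, Y \ {x, z}} : Finset (Finset α)) ∈ restrictSS 𝒮 Y ∧
      ({{y, z}, Y \ {y, z}} : Finset (Finset α)) ∈ restrictSS 𝒮 Y)

/-- Two splits are incompatible if they are distinct and all four pairwise
intersections of their parts are nonempty. -/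
def Incompatible (S T : Finset (Finset α)) : Prop :=
  S ≠ T ∧ ∀ A ∈ S, ∀ B ∈ T, A ∩ B ≠ ∅

open scoped Classical in
/-- The dimension of a split system: maximum size of a pairwise incompatible subset
(which is `1` when all splits are pairwise compatible and `𝒮` is nonempty). -/
noncomputable def dimSS (𝒮 : Finset (Finset (Finset α))) : ℕ :=
  (𝒮.powerset.filter fun 𝒯 => ∀ S ∈ 𝒯, ∀ T ∈ 𝒯, S ≠ T → Incompatible S T).sup Finset.card

/-- The injective dimension `ID(n)`: minimum dimension of an injective split system
on `{1, …, n}`. -/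
noncomputable def ID (n : ℕ) : ℕ :=
  sInf {d : ℕ | ∃ 𝒮 : Finset (Finset (Finset ℕ)),
    IsSplitSystem (Finset.Icc 1 n) 𝒮 ∧ IsInjective (Finset.Icc 1 n) 𝒮 ∧ dimSS 𝒮 = d}

/-- The injective 2-split dimension `ID₂(n)`: minimum dimension of an injective split
system on `{1, …, n}` all of whose non-trivial splits have size 2. -/
noncomputable def ID2 (n : ℕ) : ℕ :=
  sInf {d : ℕ | ∃ 𝒮 : Finset (Finset (Finset ℕ)),
    IsSplitSystem (Finset.Icc 1 n) 𝒮 ∧ IsInjective (Finset.Icc 1 n) 𝒮 ∧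
    (∀ S ∈ 𝒮, IsRSplit (Finset.Icc 1 n) 1 S ∨ IsRSplit (Finset.Icc 1 n) 2 S) ∧
    dimSS 𝒮 = d}

/-- `𝒮` is rooted-injective relative to `r`. -/
def IsRootedInjective (X : Finset α) (r : α) (𝒮 : Finset (Finset (Finset α))) : Prop :=
  ∀ Z Z' : Finset α, Z ⊆ X \ {r} → Z' ⊆ X \ {r} → Z.card = 2 → Z'.card = 2 → Z ≠ Z' →
    ∃ S ∈ 𝒮, phiNe (insert r Z) (insert r Z') S

/-- The rooted-injective dimension `ID^r(n)`: minimum dimension of a split system on an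
`n`-element set that is rooted-injective relative to a given element. -/
noncomputable def IDr (n : ℕ) : ℕ :=
  sInf {d : ℕ | ∃ 𝒮 : Finset (Finset (Finset ℕ)),
    IsSplitSystem (Finset.Icc 1 n) 𝒮 ∧ IsRootedInjective (Finset.Icc 1 n) 1 𝒮 ∧
    dimSS 𝒮 = d}

/-- `𝒮` is circular: there is a labelling `x_1, …, x_n` of `X` such that every split
of `𝒮` has the form `{x_i, …, x_j} | complement`. -/
def IsCircular (X : Finset α) (𝒮 : Finset (Finset (Finset α))) : Prop :=
  ∃ f : ℕ → α, Set.InjOn f ↑(Finset.Icc 1 X.card) ∧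
    (Finset.Icc 1 X.card).image f = X ∧
    ∀ S ∈ 𝒮, ∃ i j : ℕ, 1 ≤ i ∧ i ≤ j ∧ j ≤ X.card ∧
      S = {(Finset.Icc i j).image f, X \ (Finset.Icc i j).image f}

/-- `𝒮` is maximal circular: circular and not properly contained in any circular
split system on `X`. -/
def IsMaximalCircular (X : Finset α) (𝒮 : Finset (Finset (Finset α))) : Prop :=
  IsCircular X 𝒮 ∧ ∀ 𝒮' : Finset (Finset (Finset α)),
    IsSplitSystem X 𝒮' → IsCircular X 𝒮' → 𝒮 ⊆ 𝒮' → 𝒮' = 𝒮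

/-- The degree of `x` in the graph `P(𝒮)` on vertex set `X` whose edges are the
pairs `{x, y}` with `xy | X − {x,y} ∈ 𝒮`. -/
def degP (X : Finset α) (𝒮 : Finset (Finset (Finset α))) (x : α) : ℕ :=
  ((X \ {x}).filter fun y => ({{x, y}, X \ {x, y}} : Finset (Finset α)) ∈ 𝒮).card

/-- `P(𝒮)` contains a 3-clique. -/
def HasTriangle (X : Finset α) (𝒮 : Finset (Finset (Finset α))) : Prop :=
  ∃ x ∈ X, ∃ y ∈ X, ∃ z ∈ X, x ≠ y ∧ x ≠ z ∧ y ≠ z ∧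
    ({{x, y}, X \ {x, y}} : Finset (Finset α)) ∈ 𝒮 ∧
    ({{x, z}, X \ {x, z}} : Finset (Finset α)) ∈ 𝒮 ∧
    ({{y, z}, X \ {y, z}} : Finset (Finset α)) ∈ 𝒮

/-- Conditions (B1) and (B2) for a map to be a vertex of the Buneman graph. -/
def IsBunemanVertex (𝒮 : Finset (Finset (Finset α))) (φ : {S // S ∈ 𝒮} → Finset α) : Prop :=
  (∀ S, φ S ∈ S.1) ∧ ∀ S S', S ≠ S' → (φ S ∩ φ S').Nonempty

/-- The vertex set of the Buneman graph `B(𝒮)`. -/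
abbrev BunemanVertex (𝒮 : Finset (Finset (Finset α))) : Type _ :=
  {φ : {S // S ∈ 𝒮} → Finset α // IsBunemanVertex 𝒮 φ}

/-- The Buneman graph `B(𝒮)`: two vertices are adjacent iff they differ on exactly
one split. -/
def BunemanGraph (𝒮 : Finset (Finset (Finset α))) : SimpleGraph (BunemanVertex 𝒮) where
  Adj φ ψ := ∃! S, φ.1 S ≠ ψ.1 S
  symm := by
    constructor
    rintro φ ψ ⟨S, hS, hU⟩
    exact ⟨S, hS.symm, fun T hT => hU T hT.symm⟩
  loopless := by
    constructor
    rintro φ ⟨S, hS, -⟩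
    exact hS rfl

/-- `m` is a median of `u`, `v`, `w` in the graph `G`. -/
def IsMedian {V : Type*} (G : SimpleGraph V) (u v w m : V) : Prop :=
  G.dist u m + G.dist m v = G.dist u v ∧
  G.dist v m + G.dist m w = G.dist v w ∧
  G.dist u m + G.dist m w = G.dist u w


section Splits

variable {X : Finset α}

lemma IsSplit.eq_insert_sdiff {S : Finset (Finset α)} (hS : IsSplit X S) {A : Finset α}
    (hA : A ∈ S) : S = {A, X \ A} := by
  obtain ⟨C, D, rfl, hU, hI, -, -⟩ := hS
  have hCD : Disjoint C D := disjoint_iff_inter_eq_empty.mpr hI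
  rcases mem_insert.mp hA with rfl | hAD
  · rw [← hU, union_sdiff_cancel_left hCD]
  · rw [mem_singleton.mp hAD, ← hU, union_sdiff_cancel_right hCD, pair_comm]

lemma isSplit_insert_sdiff {A : Finset α} (hAX : A ⊆ X) (hA : A.Nonempty)
    (hXA : (X \ A).Nonempty) : IsSplit X {A, X \ A} :=
  ⟨A, X \ A, rfl, union_sdiff_of_subset hAX, inter_sdiff_self A X,
    hA.ne_empty, hXA.ne_empty⟩

lemma isRSplit_insert_sdiff {A : Finset α} {r : ℕ} (hAX : A ⊆ X) (hr : 0 < r)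
    (hA : A.card = r) (hX : 2 * r ≤ X.card) : IsRSplit X r {A, X \ A} := by
  have hXA : (X \ A).card = X.card - r := by rw [card_sdiff_of_subset hAX, hA]
  refine ⟨isSplit_insert_sdiff hAX (card_pos.mp (by omega)) (card_pos.mp (by omega)),
    ⟨A, mem_insert_self _ _, hA⟩, ?_⟩
  simp only [mem_insert, mem_singleton, forall_eq_or_imp, forall_eq]
  omega

lemma IsRSplit.exists_eq_insert_sdiff {r : ℕ} {S : Finset (Finset α)} (hS : IsRSplit X r S) :
    ∃ A ⊆ X, A.card = r ∧ S = {A, X \ A} := by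
  obtain ⟨hsplit, ⟨A, hA, hAr⟩, -⟩ := hS
  have hS := hsplit.eq_insert_sdiff hA
  obtain ⟨C, D, rfl, hU, -⟩ := hsplit
  refine ⟨A, ?_, hAr, hS⟩
  rw [← hU]
  rcases mem_insert.mp hA with rfl | hAD
  · exact subset_union_left
  · exact mem_singleton.mp hAD ▸ subset_union_right

end Splits

section Separation

variable {X Y Y' P : Finset α}

lemma not_phiNe_of_card_le_one {A B : Finset α} (hA : A.card ≤ 1) : ¬ phiNe Y Y' {A, B} := by
  rintro ⟨t, ht, t', ht', htt', hYt, hY't'⟩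
  have hsmall : ∀ Z : Finset α, (Z ∩ A).card ≤ 1 := fun Z =>
    (card_le_card inter_subset_right).trans hA
  simp only [mem_insert, mem_singleton] at ht ht'
  rcases ht with rfl | rfl <;> rcases ht' with rfl | rfl
  all_goals first | exact htt' rfl | linarith [hsmall Y, hsmall Y']

lemma two_le_card_inter_iff_subset (hP : P.card = 2) : 2 ≤ (Y ∩ P).card ↔ P ⊆ Y := by
  rw [← inter_eq_right]
  constructor
  · exact fun h => eq_of_subset_of_card_le inter_subset_right (hP ▸ h)
  · intro h; rw [h, hP]

lemma two_le_card_inter_sdiff_iff (hYX : Y ⊆ X) (hY : Y.card = 3) (hP : P.card = 2) :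
    2 ≤ (Y ∩ (X \ P)).card ↔ ¬ P ⊆ Y := by
  have hYP : Y ∩ (X \ P) = Y \ P := by
    ext x
    simp only [mem_inter, mem_sdiff]
    exact ⟨fun h => ⟨h.1, h.2.2⟩, fun h => ⟨h.1, hYX h.1, h.2⟩⟩
  rw [← two_le_card_inter_iff_subset hP, hYP]
  have := card_sdiff_add_card_inter Y P
  omega

lemma phiNe_insert_sdiff_iff (hYX : Y ⊆ X) (hY'X : Y' ⊆ X) (hY : Y.card = 3) (hY' : Y'.card = 3)
    (hP : P.card = 2) :
    phiNe Y Y' {P, X \ P} ↔ (P ⊆ Y ∧ ¬ P ⊆ Y') ∨ (P ⊆ Y' ∧ ¬ P ⊆ Y) := by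
  have hne : P ≠ X \ P := by
    obtain ⟨x, hx⟩ := card_pos.mp (show 0 < P.card by omega)
    intro h
    exact (mem_sdiff.mp (h ▸ hx)).2 hx
  rw [← two_le_card_inter_sdiff_iff hYX hY hP, ← two_le_card_inter_sdiff_iff hY'X hY' hP,
    ← two_le_card_inter_iff_subset hP, ← two_le_card_inter_iff_subset hP]
  constructor
  · rintro ⟨t, ht, t', ht', htt', hYt, hY't'⟩
    simp only [mem_insert, mem_singleton] at ht ht'
    rcases ht with rfl | rfl <;> rcases ht' with rfl | rfl
    all_goals first | exact absurd rfl htt' | tauto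
  · rintro (⟨h, h'⟩ | ⟨h, h'⟩)
    · exact ⟨P, mem_insert_self _ _, X \ P, by simp, hne, h, h'⟩
    · exact ⟨X \ P, by simp, P, mem_insert_self _ _, hne.symm, h', h⟩

end Separation

section Incompatibility

variable {X : Finset α}

lemma not_incompatible_of_card_le_one {S : Finset (Finset α)} {A C D : Finset α} (hAS : A ∈ S)
    (hA : A.card ≤ 1) (hCD : C ∩ D = ∅) : ¬ Incompatible S {C, D} := by
  rintro ⟨-, h⟩
  obtain ⟨x, hx⟩ := nonempty_iff_ne_empty.mpr (h A hAS C (mem_insert_self _ _))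
  obtain ⟨y, hy⟩ := nonempty_iff_ne_empty.mpr (h A hAS D (by simp))
  rw [mem_inter] at hx hy
  have hxy : x = y := card_le_one.mp hA x hx.1 y hy.1
  subst hxy
  simpa [hCD] using mem_inter.mpr ⟨hx.2, hy.2⟩

lemma incompatible_pair_splits {a b c : α} (hX : 4 ≤ X.card) (hb : b ∈ X) (hc : c ∈ X)
    (hab : a ≠ b) (hac : a ≠ c) (hbc : b ≠ c) :
    Incompatible {{a, b}, X \ {a, b}} {{a, c}, X \ {a, c}} := by
  obtain ⟨w, hw⟩ : (X \ {a, b, c}).Nonempty := by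
    rw [← card_pos]
    have := le_card_sdiff {a, b, c} X
    have := card_le_three (a := a) (b := b) (c := c)
    omega
  simp only [mem_sdiff, mem_insert, mem_singleton, not_or] at hw
  refine ⟨fun h => ?_, ?_⟩
  · have : ({a, b} : Finset α) ∈ ({{a, c}, X \ {a, c}} : Finset (Finset α)) := h ▸ by simp
    simp only [mem_insert, mem_singleton] at this
    rcases this with h | h
    · simpa [hab.symm, hbc] using (Finset.ext_iff.mp h b).mp (by simp)
    · simpa using (Finset.ext_iff.mp h a).mp (by simp)
  · simp only [mem_insert, mem_singleton, forall_eq_or_imp, forall_eq,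
      ← nonempty_iff_ne_empty]
    refine ⟨⟨⟨a, by simp⟩, ⟨b, by simp [hb, hab.symm, hbc]⟩⟩, ⟨c, by simp [hc, hac.symm, hbc.symm]⟩,
      ⟨w, by simp [hw]⟩⟩

end Incompatibility

section Dimension

open scoped Classical in
lemma card_le_dimSS {𝒮 𝒯 : Finset (Finset (Finset α))} (h𝒯 : 𝒯 ⊆ 𝒮)
    (hinc : ∀ S ∈ 𝒯, ∀ T ∈ 𝒯, S ≠ T → Incompatible S T) : 𝒯.card ≤ dimSS 𝒮 :=
  le_sup (f := Finset.card) (mem_filter.mpr ⟨mem_powerset.mpr h𝒯, hinc⟩)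

open scoped Classical in
lemma dimSS_le {𝒮 : Finset (Finset (Finset α))} {k : ℕ}
    (h : ∀ 𝒯 ⊆ 𝒮, (∀ S ∈ 𝒯, ∀ T ∈ 𝒯, S ≠ T → Incompatible S T) → 𝒯.card ≤ k) :
    dimSS 𝒮 ≤ k :=
  Finset.sup_le fun 𝒯 h𝒯 => by
    rw [mem_filter, mem_powerset] at h𝒯
    exact h 𝒯 h𝒯.1 h𝒯.2

end Dimension

lemma exists_eq_pair_of_mem {P : Finset α} {a : α} (hP : P.card = 2) (ha : a ∈ P) :
    ∃ b, b ≠ a ∧ P = {a, b} := by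
  obtain ⟨b, hb⟩ := card_eq_one.mp (show (P.erase a).card = 1 by rw [card_erase_of_mem ha, hP])
  exact ⟨b, ne_of_mem_erase (hb ▸ mem_singleton_self b), by rw [← insert_erase ha, hb]⟩

lemma exists_mem_all_or_subset_triple_of_intersecting {E : Finset (Finset α)}
    (hE : (E : Set (Finset α)).Intersecting) (h2 : ∀ e ∈ E, e.card = 2) (hne : E.Nonempty) :
    (∃ v, ∀ e ∈ E, v ∈ e) ∨ ∃ a b c : α, ∀ e ∈ E, e ⊆ {a, b, c} := by
  obtain ⟨e₁, he₁⟩ := hne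
  obtain ⟨a, b, hab, rfl⟩ := card_eq_two.mp (h2 e₁ he₁)
  by_cases ha : ∀ e ∈ E, a ∈ e
  · exact .inl ⟨a, ha⟩
  by_cases hb : ∀ e ∈ E, b ∈ e
  · exact .inl ⟨b, hb⟩
  push Not at ha hb
  obtain ⟨e₂, he₂, hae₂⟩ := ha
  obtain ⟨e₃, he₃, hbe₃⟩ := hb
  have hmeet : ∀ {e f : Finset α}, e ∈ E → f ∈ E → ∃ x ∈ e, x ∈ f := fun he hf =>
    not_disjoint_iff.mp (hE (mem_coe.mpr he) (mem_coe.mpr hf))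
  have hbe₂ : b ∈ e₂ := by
    obtain ⟨x, hx, hx₂⟩ := hmeet he₁ he₂
    rcases mem_insert.mp hx with rfl | hx
    · exact absurd hx₂ hae₂
    · exact mem_singleton.mp hx ▸ hx₂
  obtain ⟨c, hcb, rfl⟩ := exists_eq_pair_of_mem (h2 e₂ he₂) hbe₂
  refine .inr ⟨a, b, c, fun e he => ?_⟩
  obtain ⟨u, w, huw, rfl⟩ := card_eq_two.mp (h2 e he)
  obtain ⟨x₁, hx₁, hx₁'⟩ := hmeet he he₁
  obtain ⟨x₂, hx₂, hx₂'⟩ := hmeet he he₂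
  obtain ⟨x₃, hx₃, hx₃'⟩ := hmeet he he₃
  obtain ⟨y₁, hy₁, hy₁'⟩ := hmeet he₃ he₁
  obtain ⟨y₂, hy₂, hy₂'⟩ := hmeet he₃ he₂
  obtain ⟨p, q, hpq, rfl⟩ := card_eq_two.mp (h2 e₃ he₃)
  simp only [mem_insert, mem_singleton] at *
  simp only [insert_subset_iff, singleton_subset_iff, mem_insert, mem_singleton]
  grind

def pairSplitSystem (X : Finset α) (E : Finset (Finset α)) : Finset (Finset (Finset α)) :=
  X.image (fun x => {{x}, X \ {x}}) ∪ E.image (fun P => {P, X \ P})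

section PairSplitSystem

variable {X : Finset α} {E : Finset (Finset α)}

lemma mem_pairSplitSystem {S : Finset (Finset α)} :
    S ∈ pairSplitSystem X E ↔
      (∃ x ∈ X, {{x}, X \ {x}} = S) ∨ ∃ P ∈ E, {P, X \ P} = S := by
  simp only [pairSplitSystem, mem_union, mem_image]

lemma insert_sdiff_inj (hX : 5 ≤ X.card) {P Q : Finset α} (hP : P ∈ X.powersetCard 2)
    (hQ : Q ∈ X.powersetCard 2) :
    ({P, X \ P} : Finset (Finset α)) = {Q, X \ Q} ↔ P = Q := by
  rw [mem_powersetCard] at hP hQ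
  refine ⟨fun h => ?_, fun h => h ▸ rfl⟩
  have hPQ : P ∈ ({Q, X \ Q} : Finset (Finset α)) := h ▸ mem_insert_self _ _
  rcases mem_insert.mp hPQ with hPQ | hPQ
  · exact hPQ
  · have := card_sdiff_of_subset hQ.1
    rw [mem_singleton.mp hPQ] at hP
    omega

lemma isSplitSystem_pairSplitSystem (hX : 3 ≤ X.card) (hE : E ⊆ X.powersetCard 2) :
    IsSplitSystem X (pairSplitSystem X E) := by
  refine ⟨fun S hS => ?_, fun x hx => mem_pairSplitSystem.mpr (.inl ⟨x, hx, rfl⟩)⟩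
  have hsplit {A : Finset α} (hAX : A ⊆ X) (hA : A.card ≤ 2) (hA₀ : A.Nonempty) :
      IsSplit X {A, X \ A} :=
    isSplit_insert_sdiff hAX hA₀ (card_pos.mp (by rw [card_sdiff_of_subset hAX]; omega))
  rcases mem_pairSplitSystem.mp hS with ⟨x, hx, rfl⟩ | ⟨P, hP, rfl⟩
  · exact hsplit (singleton_subset_iff.mpr hx) (by simp) (singleton_nonempty x)
  · obtain ⟨hPX, hP2⟩ := mem_powersetCard.mp (hE hP)
    exact hsplit hPX hP2.le (card_pos.mp (by omega))

lemma isRSplit_of_mem_pairSplitSystem (hX : 4 ≤ X.card) (hE : E ⊆ X.powersetCard 2) :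
    ∀ S ∈ pairSplitSystem X E, IsRSplit X 1 S ∨ IsRSplit X 2 S := by
  intro S hS
  rcases mem_pairSplitSystem.mp hS with ⟨x, hx, rfl⟩ | ⟨P, hP, rfl⟩
  · exact .inl (isRSplit_insert_sdiff (singleton_subset_iff.mpr hx) one_pos (card_singleton x)
      (by omega))
  · obtain ⟨hPX, hP2⟩ := mem_powersetCard.mp (hE hP)
    exact .inr (isRSplit_insert_sdiff hPX two_pos hP2 hX)

lemma isInjective_pairSplitSystem (hE : E ⊆ X.powersetCard 2)
    (h : ∀ Y Y' : Finset α, Y ⊆ X → Y' ⊆ X → Y.card = 3 → Y'.card = 3 → Y ≠ Y' →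
      ∃ P ∈ E, (P ⊆ Y ∧ ¬ P ⊆ Y') ∨ (P ⊆ Y' ∧ ¬ P ⊆ Y)) :
    IsInjective X (pairSplitSystem X E) := by
  intro Y Y' hYX hY'X hY hY' hYY'
  obtain ⟨P, hP, hsep⟩ := h Y Y' hYX hY'X hY hY' hYY'
  exact ⟨{P, X \ P}, mem_pairSplitSystem.mpr (.inr ⟨P, hP, rfl⟩),
    (phiNe_insert_sdiff_iff hYX hY'X hY hY' (mem_powersetCard.mp (hE hP)).2).mpr hsep⟩

lemma dimSS_pairSplitSystem_le (hX : 5 ≤ X.card) (hE : E ⊆ X.powersetCard 2) {k : ℕ}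
    (hk : 1 ≤ k) (h : ∀ F ⊆ E, (F : Set (Finset α)).Intersecting → F.card ≤ k) :
    dimSS (pairSplitSystem X E) ≤ k := by
  refine dimSS_le fun 𝒯 h𝒯 hinc => ?_
  rcases le_or_gt 𝒯.card 1 with h𝒯₁ | h𝒯₁
  · omega
  have hpair : ∀ S ∈ 𝒯, ∃ P ∈ E, {P, X \ P} = S := by
    intro S hS
    refine (mem_pairSplitSystem.mp (h𝒯 hS)).resolve_left ?_
    rintro ⟨x, -, rfl⟩
    obtain ⟨T, hT, hTS⟩ := exists_mem_ne h𝒯₁ {{x}, X \ {x}}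
    obtain ⟨C, D, rfl, -, hCD, -⟩ :=
      (isSplitSystem_pairSplitSystem (by omega) hE).1 T (h𝒯 hT)
    exact not_incompatible_of_card_le_one (mem_insert_self _ _) (card_singleton x).le hCD
      (hinc _ hS _ hT hTS.symm)
  set F := E.filter fun P => {P, X \ P} ∈ 𝒯
  have h𝒯F : 𝒯 ⊆ F.image fun P => {P, X \ P} := by
    intro S hS
    obtain ⟨P, hP, rfl⟩ := hpair S hS
    exact mem_image.mpr ⟨P, mem_filter.mpr ⟨hP, hS⟩, rfl⟩
  have hF : (F : Set (Finset α)).Intersecting := by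
    intro P hP Q hQ
    rw [mem_coe, mem_filter] at hP hQ
    by_cases hPQ : P = Q
    · subst hPQ
      rw [disjoint_self, bot_eq_empty, ← ne_eq, ← nonempty_iff_ne_empty, ← card_pos,
        (mem_powersetCard.mp (hE hP.1)).2]
      exact two_pos
    · have hne : ({P, X \ P} : Finset (Finset α)) ≠ {Q, X \ Q} :=
        mt (insert_sdiff_inj hX (hE hP.1) (hE hQ.1)).mp hPQ
      rw [disjoint_iff_inter_eq_empty]
      exact (hinc _ hP.2 _ hQ.2 hne).2 P (mem_insert_self _ _) Q (mem_insert_self _ _)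
  calc 𝒯.card ≤ (F.image fun P => {P, X \ P}).card := card_le_card h𝒯F
    _ ≤ F.card := card_image_le
    _ ≤ k := h F (filter_subset _ _) hF

end PairSplitSystem

/-- The non-neighbours of `c` in the graph `P(𝒮)` of `degP`. -/
def nonNbrsP (X : Finset α) (𝒮 : Finset (Finset (Finset α))) (c : α) : Finset α :=
  (X \ {c}).filter fun y => ({{c, y}, X \ {c, y}} : Finset (Finset α)) ∉ 𝒮

section LowerBound

variable {X : Finset α} {𝒮 : Finset (Finset (Finset α))}

lemma card_nonNbrsP_add_degP {c : α} (hc : c ∈ X) :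
    (nonNbrsP X 𝒮 c).card + degP X 𝒮 c = X.card - 1 := by
  rw [nonNbrsP, degP, add_comm, card_filter_add_card_filter_not, card_sdiff_of_subset
    (singleton_subset_iff.mpr hc), card_singleton]

lemma card_le_dimSS_of_pair_splits_mem (hX : 4 ≤ X.card) {c : α} {N : Finset α}
    (hN : N ⊆ X \ {c}) (h𝒮 : ∀ y ∈ N, ({{c, y}, X \ {c, y}} : Finset (Finset α)) ∈ 𝒮) :
    N.card ≤ dimSS 𝒮 := by
  have hN' : ∀ y ∈ N, y ∈ X ∧ y ≠ c := fun y hy => by simpa using hN hy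
  have hinc : ∀ y ∈ N, ∀ z ∈ N, y ≠ z →
      Incompatible {{c, y}, X \ {c, y}} {{c, z}, X \ {c, z}} := fun y hy z hz hyz =>
    incompatible_pair_splits hX (hN' y hy).1 (hN' z hz).1 (hN' y hy).2.symm (hN' z hz).2.symm hyz
  have hinj : Set.InjOn (fun y => ({{c, y}, X \ {c, y}} : Finset (Finset α))) N := by
    intro y hy z hz hyz
    by_contra hne
    exact (hinc y hy z hz hne).1 hyz
  rw [← card_image_of_injOn hinj]
  refine card_le_dimSS (fun S hS => ?_) ?_
  · obtain ⟨y, hy, rfl⟩ := mem_image.mp hS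
    exact h𝒮 y hy
  · simp only [mem_image]
    rintro _ ⟨y, hy, rfl⟩ _ ⟨z, hz, rfl⟩ hne
    exact hinc y hy z hz fun h => hne (h ▸ rfl)

lemma degP_le_dimSS (hX : 4 ≤ X.card) (c : α) : degP X 𝒮 c ≤ dimSS 𝒮 :=
  card_le_dimSS_of_pair_splits_mem hX (filter_subset _ _) fun _ hy => (mem_filter.mp hy).2

lemma insert_sdiff_notMem_of_subset_nonNbrsP {c : α} {p P : Finset α} (hp : p ⊆ nonNbrsP X 𝒮 c)
    (hP : P.card = 2) (hPc : P ⊆ insert c p) (hPp : ¬ P ⊆ p) : {P, X \ P} ∉ 𝒮 := by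
  have hcP : c ∈ P := by
    by_contra hcP
    exact hPp ((subset_insert_iff_of_notMem hcP).mp hPc)
  obtain ⟨e, hec, rfl⟩ := exists_eq_pair_of_mem hP hcP
  have hep : e ∈ p := by
    have := hPc (mem_insert_of_mem (mem_singleton_self e))
    exact (mem_insert.mp this).resolve_left hec
  exact (mem_filter.mp (hp hep)).2

/-- For `c ≠ c'` the 3-sets `p ∪ {c}` and `p ∪ {c'}` could only be separated by a 2-split
`{c, e}` or `{c', e}` with `e ∈ p`, and these are missing from `𝒮`. -/
lemma eq_of_subset_nonNbrsP (hinj : IsInjective X 𝒮)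
    (h12 : ∀ S ∈ 𝒮, IsRSplit X 1 S ∨ IsRSplit X 2 S) {p : Finset α} (hp : p.card = 2)
    {c c' : α} (hc : c ∈ X) (hc' : c' ∈ X) (hpc : p ⊆ nonNbrsP X 𝒮 c)
    (hpc' : p ⊆ nonNbrsP X 𝒮 c') : c = c' := by
  have hsub : ∀ {d}, p ⊆ nonNbrsP X 𝒮 d → p ⊆ X \ {d} := fun h =>
    h.trans (filter_subset _ _)
  have hcp : c ∉ p := fun h => by simpa using hsub hpc h
  have hc'p : c' ∉ p := fun h => by simpa using hsub hpc' h
  have hpX : p ⊆ X := (hsub hpc).trans sdiff_subset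
  by_contra hne
  have hY : (insert c p).card = 3 := by rw [card_insert_of_notMem hcp, hp]
  have hY' : (insert c' p).card = 3 := by rw [card_insert_of_notMem hc'p, hp]
  have hYY' : insert c p ≠ insert c' p := fun h => by
    have := h ▸ mem_insert_self c p
    exact (mem_insert.mp this).elim hne hcp
  obtain ⟨S, hS, hφ⟩ := hinj _ _ (insert_subset hc hpX) (insert_subset hc' hpX) hY hY' hYY'
  rcases h12 S hS with h1 | h2
  · obtain ⟨A, -, hA, rfl⟩ := h1.exists_eq_insert_sdiff
    exact not_phiNe_of_card_le_one hA.le hφ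
  · obtain ⟨P, -, hP, rfl⟩ := h2.exists_eq_insert_sdiff
    rcases (phiNe_insert_sdiff_iff (insert_subset hc hpX) (insert_subset hc' hpX) hY hY'
      hP).mp hφ with ⟨hPY, hPY'⟩ | ⟨hPY', hPY⟩
    · exact insert_sdiff_notMem_of_subset_nonNbrsP hpc hP hPY
        (fun h => hPY' (h.trans (subset_insert _ _))) hS
    · exact insert_sdiff_notMem_of_subset_nonNbrsP hpc' hP hPY'
        (fun h => hPY (h.trans (subset_insert _ _))) hS

lemma sum_choose_two_card_nonNbrsP_le (hinj : IsInjective X 𝒮)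
    (h12 : ∀ S ∈ 𝒮, IsRSplit X 1 S ∨ IsRSplit X 2 S) :
    ∑ c ∈ X, (nonNbrsP X 𝒮 c).card.choose 2 ≤ X.card.choose 2 := by
  have hdisj : (X : Set α).PairwiseDisjoint fun c => (nonNbrsP X 𝒮 c).powersetCard 2 := by
    intro c hc c' hc' hne
    rw [Function.onFun, disjoint_left]
    intro p hp hp'
    rw [mem_powersetCard] at hp hp'
    exact hne (eq_of_subset_nonNbrsP hinj h12 hp.2 hc hc' hp.1 hp'.1)
  calc ∑ c ∈ X, (nonNbrsP X 𝒮 c).card.choose 2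
      = (X.biUnion fun c => (nonNbrsP X 𝒮 c).powersetCard 2).card := by
        rw [card_biUnion hdisj]
        simp only [card_powersetCard]
    _ ≤ (X.powersetCard 2).card := by
        refine card_le_card (biUnion_subset.mpr fun c _ => powersetCard_mono ?_)
        exact (filter_subset _ _).trans sdiff_subset
    _ = X.card.choose 2 := card_powersetCard 2 X

lemma choose_two_lt_mul_choose_two {n m : ℕ} (hn : 5 ≤ n) (hm : n ≤ 2 * m) :
    n.choose 2 < n * m.choose 2 := by
  have h : ∀ k, (k + 1).choose 2 * 2 = (k + 1) * k := fun k => by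
    simpa using (Nat.add_one_mul_choose_eq k 1).symm
  obtain ⟨n, rfl⟩ : ∃ n', n = n' + 1 := ⟨n - 1, by omega⟩
  obtain ⟨m, rfl⟩ : ∃ m', m = m' + 1 := ⟨m - 1, by omega⟩
  have hn2 := h n
  have hm2 := h m
  have hnm : n < (m + 1) * m := by
    have := Nat.mul_le_mul_left (m + 1) (show 2 ≤ m by omega)
    omega
  have := Nat.mul_lt_mul_of_pos_left hnm (Nat.succ_pos n)
  nlinarith

theorem card_div_two_le_dimSS (hX : 5 ≤ X.card) (hinj : IsInjective X 𝒮)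
    (h12 : ∀ S ∈ 𝒮, IsRSplit X 1 S ∨ IsRSplit X 2 S) : X.card / 2 ≤ dimSS 𝒮 := by
  by_contra! hlt
  set m := X.card - 1 - dimSS 𝒮
  have hm : ∀ c ∈ X, m ≤ (nonNbrsP X 𝒮 c).card := fun c hc => by
    have := card_nonNbrsP_add_degP (𝒮 := 𝒮) hc
    have := degP_le_dimSS (X := X) (𝒮 := 𝒮) (by omega) c
    omega
  have hcount : X.card * m.choose 2 ≤ X.card.choose 2 :=
    calc X.card * m.choose 2 = ∑ _c ∈ X, m.choose 2 := by rw [sum_const, smul_eq_mul]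
      _ ≤ ∑ c ∈ X, (nonNbrsP X 𝒮 c).card.choose 2 :=
        sum_le_sum fun c hc => Nat.choose_le_choose 2 (hm c hc)
      _ ≤ X.card.choose 2 := sum_choose_two_card_nonNbrsP_le hinj h12
  exact (choose_two_lt_mul_choose_two hX (by omega)).not_ge hcount

end LowerBound

def cycAdj (n a b : ℕ) : Prop :=
  b = a + 1 ∨ a = b + 1 ∨ (a = 1 ∧ b = n) ∨ (a = n ∧ b = 1)

instance (n : ℕ) : DecidableRel (cycAdj n) := fun a b => by
  unfold cycAdj
  infer_instance

def cycleNonEdges (n : ℕ) : Finset (Finset ℕ) :=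
  ((Icc 1 n).powersetCard 2).filter fun P => ∀ a ∈ P, ∀ b ∈ P, ¬ cycAdj n a b

section Cycle

variable {n : ℕ}

lemma mem_cycleNonEdges {P : Finset ℕ} :
    P ∈ cycleNonEdges n ↔ P ⊆ Icc 1 n ∧ P.card = 2 ∧ ∀ a ∈ P, ∀ b ∈ P, ¬ cycAdj n a b := by
  rw [cycleNonEdges, mem_filter, mem_powersetCard, and_assoc]

lemma pair_mem_cycleNonEdges (hn : 2 ≤ n) {a b : ℕ} (ha : a ∈ Icc 1 n) (hb : b ∈ Icc 1 n)
    (hab : a ≠ b) (h : ¬ cycAdj n a b) : {a, b} ∈ cycleNonEdges n := by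
  simp only [mem_cycleNonEdges, insert_subset_iff, singleton_subset_iff, card_pair hab,
    mem_insert, mem_singleton, forall_eq_or_imp, forall_eq]
  simp only [mem_Icc, cycAdj, true_and] at ha hb h ⊢
  omega

lemma exists_cycleNonEdges_separating (hn : 5 ≤ n) {Y Y' : Finset ℕ} (hYX : Y ⊆ Icc 1 n)
    (hY'X : Y' ⊆ Icc 1 n) (hY : Y.card = 3) (hY' : Y'.card = 3) (hYY' : Y ≠ Y') :
    ∃ P ∈ cycleNonEdges n, (P ⊆ Y ∧ ¬ P ⊆ Y') ∨ (P ⊆ Y' ∧ ¬ P ⊆ Y) := by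
  obtain ⟨c, hcY, hcY'⟩ := not_subset.mp fun h => hYY' (eq_of_subset_of_card_le h (by omega))
  obtain ⟨d, hdY', hdY⟩ := not_subset.mp fun h => hYY' (eq_of_subset_of_card_le h (by omega)).symm
  by_cases hc : ∃ e ∈ Y, e ≠ c ∧ ¬ cycAdj n c e
  · obtain ⟨e, heY, hec, hce⟩ := hc
    refine ⟨{c, e}, pair_mem_cycleNonEdges (by omega) (hYX hcY) (hYX heY) hec.symm hce,
      .inl ⟨insert_subset hcY (singleton_subset_iff.mpr heY), fun h => hcY' (h (by simp))⟩⟩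
  by_cases hd : ∃ e ∈ Y', e ≠ d ∧ ¬ cycAdj n d e
  · obtain ⟨e, heY', hed, hde⟩ := hd
    refine ⟨{d, e}, pair_mem_cycleNonEdges (by omega) (hY'X hdY') (hY'X heY') hed.symm hde,
      .inr ⟨insert_subset hdY' (singleton_subset_iff.mpr heY'), fun h => hdY (h (by simp))⟩⟩
  push Not at hc hd
  obtain ⟨u, v, huv, hYuv⟩ := card_eq_two.mp (show (Y.erase c).card = 2 by
    rw [card_erase_of_mem hcY, hY])
  have huY : u ∈ Y.erase c := hYuv ▸ mem_insert_self u {v}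
  have hvY : v ∈ Y.erase c := hYuv ▸ mem_insert_of_mem (mem_singleton_self v)
  rw [mem_erase] at huY hvY
  have hcu := hc u huY.2 huY.1
  have hcv := hc v hvY.2 hvY.1
  have hmem := fun {x} (hx : x ∈ Y) => mem_Icc.mp (hYX hx)
  have hc₀ := hmem hcY
  have hu₀ := hmem huY.2
  have hv₀ := hmem hvY.2
  have hd₀ := mem_Icc.mp (hY'X hdY')
  by_cases huvY' : ({u, v} : Finset ℕ) ⊆ Y'
  · -- two distinct vertices of a cycle of length at least 5 have at most one common neighbour
    have hdu := hd u (huvY' (by simp)) fun h => hdY (h ▸ huY.2)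
    have hdv := hd v (huvY' (by simp)) fun h => hdY (h ▸ hvY.2)
    have hcd : c ≠ d := fun h => hcY' (h ▸ hdY')
    unfold cycAdj at hcu hcv hdu hdv
    omega
  · -- the cycle has no triangle
    have huv' : ¬ cycAdj n u v := by
      unfold cycAdj at hcu hcv ⊢
      omega
    exact ⟨{u, v}, pair_mem_cycleNonEdges (by omega) (hYX huY.2) (hYX hvY.2) huv huv',
      .inl ⟨insert_subset huY.2 (singleton_subset_iff.mpr hvY.2), huvY'⟩⟩

lemma card_filter_not_cycAdj_le (hn : 3 ≤ n) {v : ℕ} (hv : v ∈ Icc 1 n) :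
    (((Icc 1 n).erase v).filter fun w => ¬ cycAdj n v w).card ≤ n - 3 := by
  rw [mem_Icc] at hv
  set p := if v = 1 then n else v - 1
  set s := if v = n then 1 else v + 1
  have hsub : ({p, s} : Finset ℕ) ⊆ (Icc 1 n).erase v := by
    simp only [insert_subset_iff, singleton_subset_iff, mem_erase, mem_Icc, p, s]
    split_ifs <;> omega
  have hps : ({p, s} : Finset ℕ).card = 2 := card_pair (by simp only [p, s]; split_ifs <;> omega)
  have hfilter : ((Icc 1 n).erase v).filter (fun w => ¬ cycAdj n v w) ⊆
      (Icc 1 n).erase v \ {p, s} := by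
    intro w hw
    rw [mem_filter] at hw
    refine mem_sdiff.mpr ⟨hw.1, fun hps => hw.2 ?_⟩
    simp only [mem_insert, mem_singleton, p, s] at hps
    unfold cycAdj
    split_ifs at hps <;> omega
  have := card_sdiff_of_subset hsub
  rw [card_erase_of_mem (mem_Icc.mpr hv), Nat.card_Icc] at this
  have := card_le_card hfilter
  omega

lemma card_le_of_star_subset_cycleNonEdges (hn : 3 ≤ n) {F : Finset (Finset ℕ)}
    (hF : F ⊆ cycleNonEdges n) {v : ℕ} (hv : v ∈ Icc 1 n) (hvF : ∀ P ∈ F, v ∈ P) :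
    F.card ≤ n - 3 := by
  have hstar : F ⊆ (((Icc 1 n).erase v).filter fun w => ¬ cycAdj n v w).image
      fun w => {v, w} := by
    intro P hP
    obtain ⟨hPX, hP2, hPadj⟩ := mem_cycleNonEdges.mp (hF hP)
    obtain ⟨w, hwv, rfl⟩ := exists_eq_pair_of_mem hP2 (hvF _ hP)
    refine mem_image.mpr ⟨w, mem_filter.mpr ⟨mem_erase.mpr ⟨hwv, hPX (by simp)⟩, ?_⟩, rfl⟩
    exact hPadj v (by simp) w (by simp)
  exact (card_le_card hstar).trans (card_image_le.trans (card_filter_not_cycAdj_le hn hv))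

lemma card_le_of_subset_triple_subset_cycleNonEdges (hn : 5 ≤ n) {F : Finset (Finset ℕ)}
    (hF : F ⊆ cycleNonEdges n) {T : Finset ℕ} (hT : T.card ≤ 3) (hFT : ∀ P ∈ F, P ⊆ T) :
    F.card ≤ n - 3 := by
  have hsub : F ⊆ T.powersetCard 2 := fun P hP =>
    mem_powersetCard.mpr ⟨hFT P hP, (mem_cycleNonEdges.mp (hF hP)).2.1⟩
  have hle : F.card ≤ T.card.choose 2 := by simpa using card_le_card hsub
  have hle3 : T.card.choose 2 ≤ 3 := (Nat.choose_le_choose 2 hT).trans (by decide)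
  obtain rfl | hn6 : n = 5 ∨ 6 ≤ n := by omega
  swap
  · omega
  by_contra! hF3
  have hT3 : T.card = 3 := by
    by_contra hT3
    have := Nat.choose_le_choose 2 (show T.card ≤ 2 by omega)
    simp at this
    omega
  obtain ⟨x, y, z, hxy, hxz, hyz, rfl⟩ := card_eq_three.mp hT3
  have hFeq : F = ({x, y, z} : Finset ℕ).powersetCard 2 :=
    eq_of_subset_of_card_le hsub (by rw [card_powersetCard, hT3]; change 3 ≤ F.card; omega)
  have hedge : ∀ {p q}, p ∈ ({x, y, z} : Finset ℕ) → q ∈ ({x, y, z} : Finset ℕ) → p ≠ q →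
      p ∈ Icc 1 5 ∧ q ∈ Icc 1 5 ∧ ¬ cycAdj 5 p q := fun {p q} hp hq hpq => by
    have hpq' : {p, q} ∈ cycleNonEdges 5 := hF (hFeq ▸ mem_powersetCard.mpr
      ⟨insert_subset hp (singleton_subset_iff.mpr hq), card_pair hpq⟩)
    obtain ⟨hX, -, hadj⟩ := mem_cycleNonEdges.mp hpq'
    exact ⟨hX (by simp), hX (by simp), hadj p (by simp) q (by simp)⟩
  have hxy' := hedge (by simp) (by simp) hxy
  have hxz' := hedge (by simp) (by simp) hxz
  have hyz' := hedge (by simp) (by simp) hyz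
  -- the complement of the 5-cycle is again a 5-cycle, so it has no triangle
  simp only [mem_Icc, cycAdj] at hxy' hxz' hyz'
  omega

lemma card_le_of_intersecting_subset_cycleNonEdges (hn : 5 ≤ n) {F : Finset (Finset ℕ)}
    (hF : F ⊆ cycleNonEdges n) (hFi : (F : Set (Finset ℕ)).Intersecting) : F.card ≤ n - 3 := by
  rcases F.eq_empty_or_nonempty with rfl | hne
  · simp
  rcases exists_mem_all_or_subset_triple_of_intersecting hFi
    (fun P hP => (mem_cycleNonEdges.mp (hF hP)).2.1) hne with ⟨v, hv⟩ | ⟨a, b, c, habc⟩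
  · obtain ⟨P, hP⟩ := hne
    exact card_le_of_star_subset_cycleNonEdges (by omega) hF
      ((mem_cycleNonEdges.mp (hF hP)).1 (hv P hP)) hv
  · exact card_le_of_subset_triple_subset_cycleNonEdges hn hF card_le_three habc

end Cycle

/-- For all integers `n ≥ 5`, `⌊n/2⌋ ≤ ID₂(n) ≤ n − 3`. -/
theorem statement18 (n : ℕ) (hn : 5 ≤ n) : n / 2 ≤ ID2 n ∧ ID2 n ≤ n - 3 := by
  have hX : (Icc 1 n).card = n := by simp
  have hE : cycleNonEdges n ⊆ (Icc 1 n).powersetCard 2 := filter_subset _ _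
  have hcycle : dimSS (pairSplitSystem (Icc 1 n) (cycleNonEdges n)) ∈
      {d : ℕ | ∃ 𝒮 : Finset (Finset (Finset ℕ)),
        IsSplitSystem (Icc 1 n) 𝒮 ∧ IsInjective (Icc 1 n) 𝒮 ∧
        (∀ S ∈ 𝒮, IsRSplit (Icc 1 n) 1 S ∨ IsRSplit (Icc 1 n) 2 S) ∧ dimSS 𝒮 = d} :=
    ⟨_, isSplitSystem_pairSplitSystem (by omega) hE,
      isInjective_pairSplitSystem hE fun _ _ => exists_cycleNonEdges_separating hn,
      isRSplit_of_mem_pairSplitSystem (by omega) hE, rfl⟩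
  obtain ⟨𝒮, -, hinj, h12, hdim⟩ := Nat.sInf_mem ⟨_, hcycle⟩
  constructor
  · rw [ID2, ← hdim]
    exact hX ▸ card_div_two_le_dimSS (by omega) hinj h12
  · exact (Nat.sInf_le hcycle).trans <| dimSS_pairSplitSystem_le (by omega) hE (by omega)
      fun _ hF => card_le_of_intersecting_subset_cycleNonEdges hn hF

end InjectiveSplitSystems
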